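/- Let μ ∈ ℝ, σ > 0. For the Ornstein–Uhlenbeck-type setup with drift -μx, the derivative of the scale density is S'(x) = e^{(μ/σ²)x²} and the first-order condition for the one-sided problem with c(x) = |x| and cost q_d reads: (1/μ)·(2 - e^{-(μ/σ²)b²}) + q_d·e^{-(μ/σ²)b²} = (b - q_d μ b)·(2/σ)·sqrt(π/μ)·Φ(√(2μ)·b/σ), where Φ is the standard normal CDF. Show: if b solves this equation for volatility σ = 1, then b·σ solves the equation for general volatility σ > 0 (with the same μ, q_d). In other words, the optimal boundary is linear in σ: b* = ζ*·σ. -/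

import Mathlib

open Real MeasureTheory

/-- Standard normal cumulative distribution function. -/
noncomputable def stdNormalCDF (x : ℝ) : ℝ :=
  ∫ t in Set.Iic x, Real.exp (-t ^ 2 / 2) / Real.sqrt (2 * Real.pi)

/-- The first-order condition for the one-sided OU problem with cost c(x)=|x|. -/
def OUeq (μ σ qd b : ℝ) : Prop :=
  (1 / μ) * (2 - Real.exp (-(μ / σ ^ 2) * b ^ 2))
      + qd * Real.exp (-(μ / σ ^ 2) * b ^ 2)
    = (b - qd * μ * b) * (2 / σ) * Real.sqrt (Real.pi / μ)
        * stdNormalCDF (Real.sqrt (2 * μ) * b / σ)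

theorem stmt17 (μ σ qd b : ℝ) (hμ : 0 < μ) (hσ : 0 < σ) (hqd : 0 ≤ qd)
    (hb : OUeq μ 1 qd b) : OUeq μ σ qd (b * σ) := by
  unfold OUeq at hb ⊢
  have hσ' : σ ≠ 0 := ne_of_gt hσ
  have h1 : -(μ / σ ^ 2) * (b * σ) ^ 2 = -(μ / 1 ^ 2) * b ^ 2 := by
    field_simp
  have h2 : Real.sqrt (2 * μ) * (b * σ) / σ = Real.sqrt (2 * μ) * b / 1 := by
    field_simp
  rw [h1, h2, hb]
  field_simp
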